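/- The function x ↦ (π/8)·csch²(πx/2)·[2π²x²·coth²(πx/2) + π²x²·csch²(πx/2) − 6πx·coth(πx/2) + 2] is nonnegative for all x > 0. -/

import Mathlib

/-!
With `s = π x`, the half-angle formulas turn the bracket times `sinh² (s / 2)` into
`F₀ s = (s² + 1) cosh s - 3 s sinh s + 2 s² - 1`. Differentiating twice gives
`F₀' = F₁ = (s² - 2) sinh s - s cosh s + 4 s` and `F₁' = F₂ = s sinh s + (s² - 3) cosh s + 4`,
with `F₀ 0 = F₁ 0 = 0` and `F₂ 0 = 1`. Finally `F₂' = s² sinh s + (3 s cosh s - 2 sinh s) ≥ 0`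
because `tanh s ≤ s`, so `F₂, F₁, F₀ ≥ 0` on `[0, ∞)` in turn.
-/

open Real

lemma le_of_hasDerivAt_nonneg {f f' : ℝ → ℝ} {a x : ℝ} (hf : ∀ y, HasDerivAt f (f' y) y)
    (hf' : ∀ y, a ≤ y → 0 ≤ f' y) (hax : a ≤ x) : f a ≤ f x := by
  have hmono : MonotoneOn f (Set.Ici a) :=
    monotoneOn_of_hasDerivWithinAt_nonneg (convex_Ici a)
      (fun y _ => (hf y).continuousAt.continuousWithinAt) (fun y _ => (hf y).hasDerivWithinAt)
      (fun y hy => hf' y (interior_subset hy))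
  exact hmono Set.self_mem_Ici hax hax

lemma sinh_le_mul_cosh {x : ℝ} (hx : 0 ≤ x) : sinh x ≤ x * cosh x := by
  have hderiv (y : ℝ) : HasDerivAt (fun s => s * cosh s - sinh s) (y * sinh y) y :=
    (((hasDerivAt_id' y).fun_mul (hasDerivAt_cosh y)).fun_sub (hasDerivAt_sinh y)).congr_deriv
      (by ring)
  have h := le_of_hasDerivAt_nonneg hderiv (fun y hy => mul_nonneg hy (sinh_nonneg_iff.2 hy)) hx
  simp only [zero_mul, sinh_zero, sub_zero] at h
  linarith

lemma mul_sinh_add_sq_sub_three_mul_cosh_add_four_nonneg {s : ℝ} (hs : 0 ≤ s) :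
    0 ≤ s * sinh s + (s ^ 2 - 3) * cosh s + 4 := by
  have hderiv (y : ℝ) : HasDerivAt (fun s => s * sinh s + (s ^ 2 - 3) * cosh s + 4)
      (y ^ 2 * sinh y + (3 * y * cosh y - 2 * sinh y)) y :=
    ((((hasDerivAt_id' y).fun_mul (hasDerivAt_sinh y)).fun_add
      (((hasDerivAt_pow 2 y).sub_const 3).fun_mul (hasDerivAt_cosh y))).add_const 4).congr_deriv
        (by push_cast; ring)
  have hderiv_nonneg (y : ℝ) (hy : 0 ≤ y) : 0 ≤ y ^ 2 * sinh y + (3 * y * cosh y - 2 * sinh y) :=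
    add_nonneg (mul_nonneg (sq_nonneg y) (sinh_nonneg_iff.2 hy))
      (by nlinarith [sinh_le_mul_cosh hy, sinh_nonneg_iff.2 hy])
  have h := le_of_hasDerivAt_nonneg hderiv hderiv_nonneg hs
  norm_num at h
  linarith

lemma sq_sub_two_mul_sinh_sub_mul_cosh_add_four_mul_nonneg {s : ℝ} (hs : 0 ≤ s) :
    0 ≤ (s ^ 2 - 2) * sinh s - s * cosh s + 4 * s := by
  have hderiv (y : ℝ) : HasDerivAt (fun s => (s ^ 2 - 2) * sinh s - s * cosh s + 4 * s)
      (y * sinh y + (y ^ 2 - 3) * cosh y + 4) y :=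
    (((((hasDerivAt_pow 2 y).sub_const 2).fun_mul (hasDerivAt_sinh y)).fun_sub
      ((hasDerivAt_id' y).fun_mul (hasDerivAt_cosh y))).fun_add
        ((hasDerivAt_id' y).const_mul 4)).congr_deriv (by push_cast; ring)
  simpa using le_of_hasDerivAt_nonneg hderiv
    (fun _ hy => mul_sinh_add_sq_sub_three_mul_cosh_add_four_nonneg hy) hs

lemma sq_add_one_mul_cosh_sub_three_mul_sinh_add_two_mul_sq_sub_one_nonneg {s : ℝ} (hs : 0 ≤ s) :
    0 ≤ (s ^ 2 + 1) * cosh s - 3 * s * sinh s + 2 * s ^ 2 - 1 := by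
  have hderiv (y : ℝ) : HasDerivAt (fun s => (s ^ 2 + 1) * cosh s - 3 * s * sinh s + 2 * s ^ 2 - 1)
      ((y ^ 2 - 2) * sinh y - y * cosh y + 4 * y) y :=
    (((((hasDerivAt_pow 2 y).add_const 1).fun_mul (hasDerivAt_cosh y)).fun_sub
      (((hasDerivAt_id' y).const_mul 3).fun_mul (hasDerivAt_sinh y))).fun_add
        ((hasDerivAt_pow 2 y).const_mul 2)).sub_const 1 |>.congr_deriv (by push_cast; ring)
  simpa using le_of_hasDerivAt_nonneg hderiv
    (fun _ hy => sq_sub_two_mul_sinh_sub_mul_cosh_add_four_mul_nonneg hy) hs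

lemma bracket_eq_div_sinh_sq {t : ℝ} (ht : sinh t ≠ 0) :
    2 * (2 * t) ^ 2 * (cosh t / sinh t) ^ 2 + (2 * t) ^ 2 * (1 / sinh t) ^ 2
        - 6 * (2 * t) * (cosh t / sinh t) + 2
      = (((2 * t) ^ 2 + 1) * cosh (2 * t) - 3 * (2 * t) * sinh (2 * t) + 2 * (2 * t) ^ 2 - 1)
        / sinh t ^ 2 := by
  rw [cosh_two_mul, sinh_two_mul, eq_div_iff (pow_ne_zero 2 ht)]
  field_simp
  linear_combination (4 * t ^ 2 - 1) * cosh_sq_sub_sinh_sq t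

theorem stmt_3 (x : ℝ) (hx : 0 < x) :
    0 ≤ (π / 8) * (1 / Real.sinh (π * x / 2)) ^ 2 *
      (2 * π ^ 2 * x ^ 2 * (Real.cosh (π * x / 2) / Real.sinh (π * x / 2)) ^ 2
        + π ^ 2 * x ^ 2 * (1 / Real.sinh (π * x / 2)) ^ 2
        - 6 * π * x * (Real.cosh (π * x / 2) / Real.sinh (π * x / 2)) + 2) := by
  have hs : 0 < π * x := by positivity
  have hsinh : 0 < sinh (π * x / 2) := sinh_pos_iff.2 (by positivity)
  have h := bracket_eq_div_sinh_sq hsinh.ne'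
  rw [show 2 * (π * x / 2) = π * x by ring] at h
  rw [show 2 * π ^ 2 * x ^ 2 = 2 * (π * x) ^ 2 by ring, show π ^ 2 * x ^ 2 = (π * x) ^ 2 by ring,
    show 6 * π * x = 6 * (π * x) by ring, h]
  exact mul_nonneg (by positivity) (div_nonneg
    (sq_add_one_mul_cosh_sub_three_mul_sinh_add_two_mul_sq_sub_one_nonneg hs.le) (sq_nonneg _))
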